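/- Let U be a unitary complex matrix of size (p+q)×(p+q) written in block form U = [[A, B], [C, D]], where A is a p×p block, D is a q×q block, and B, C are the corresponding off-diagonal blocks (p and q need not be equal). Then |det A| = |det D|. -/

import Mathlib

open Matrix

/-! Right-multiplying `U = [[A, B], [C, D]]` by the block-triangular matrix `[[Aᴴ, 0], [Bᴴ, 1]]`
gives `[[1, B], [0, D]]`, because the first block column of `U Uᴴ = 1` reads `A Aᴴ + B Bᴴ = 1`,
`C Aᴴ + D Bᴴ = 0`. Taking determinants, `det U · conj (det A) = det D`, and `|det U| = 1`. -/

namespace Matrix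

variable {m n R : Type*} [Fintype m] [Fintype n] [DecidableEq m] [DecidableEq n]
  [CommRing R] [StarRing R]

theorem fromBlocks_mul_fromBlocks_conjTranspose_eq_of_mul_conjTranspose_eq_one
    {A : Matrix m m R} {B : Matrix m n R} {C : Matrix n m R} {D : Matrix n n R}
    (hU : fromBlocks A B C D * (fromBlocks A B C D)ᴴ = 1) :
    fromBlocks A B C D * fromBlocks Aᴴ 0 Bᴴ 1 = fromBlocks 1 B 0 D := by
  rw [fromBlocks_conjTranspose, fromBlocks_multiply, ← fromBlocks_one] at hU
  have hA : A * Aᴴ + B * Bᴴ = 1 := congrArg toBlocks₁₁ hU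
  have hC : C * Aᴴ + D * Bᴴ = 0 := congrArg toBlocks₂₁ hU
  rw [fromBlocks_multiply, hA, hC]
  simp only [Matrix.mul_zero, Matrix.mul_one, zero_add]

theorem det_fromBlocks_mul_star_det_eq_of_mul_conjTranspose_eq_one
    {A : Matrix m m R} {B : Matrix m n R} {C : Matrix n m R} {D : Matrix n n R}
    (hU : fromBlocks A B C D * (fromBlocks A B C D)ᴴ = 1) :
    (fromBlocks A B C D).det * star A.det = D.det := by
  simpa [det_fromBlocks_zero₁₂, det_fromBlocks_zero₂₁, det_conjTranspose] using
    congrArg det (fromBlocks_mul_fromBlocks_conjTranspose_eq_of_mul_conjTranspose_eq_one hU)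

end Matrix

theorem stmt15 (p q : ℕ)
    (A : Matrix (Fin p) (Fin p) ℂ) (B : Matrix (Fin p) (Fin q) ℂ)
    (C : Matrix (Fin q) (Fin p) ℂ) (D : Matrix (Fin q) (Fin q) ℂ)
    (hU : Matrix.fromBlocks A B C D * (Matrix.fromBlocks A B C D).conjTranspose = 1) :
    ‖A.det‖ = ‖D.det‖ := by
  have hnorm : ‖(fromBlocks A B C D).det‖ = 1 :=
    CStarRing.norm_of_mem_unitary (det_of_mem_unitary (mem_unitaryGroup_iff.mpr hU))
  calc ‖A.det‖ = ‖(fromBlocks A B C D).det‖ * ‖star A.det‖ := by rw [hnorm, norm_star, one_mul]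
    _ = ‖D.det‖ := by rw [← norm_mul, det_fromBlocks_mul_star_det_eq_of_mul_conjTranspose_eq_one hU]
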